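/- arXiv:2208.05691 — 2 statements merged into one kernel-verified Lean document; each statement's English description precedes it below -/
import Mathlib

section
/- Let c > 0, K > 0, and let Ω, a₁, a₂, b₁, b₂ be real numbers. Then ∫_{b₁}^{b₂} ∫_{a₁}^{a₂} [c² + (a + K·b − Ω)²]^{−3/2} da db = (1/(K·c²)) · [ √(c² + (a₂ + K·b₂ − Ω)²) − √(c² + (a₁ + K·b₂ − Ω)²) − √(c² + (a₂ + K·b₁ − Ω)²) + √(c² + (a₁ + K·b₁ − Ω)²) ]. -/
/-! The integrand depends on (a, b) only through a + K b, so the double integral is a second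
difference of a second antiderivative G of x ↦ (c² + x²)^(-3/2), scaled by 1/K. One may take
G x = √(c² + x²) / c², whose derivative x / (c² √(c² + x²)) has derivative (c² + x²)^(-3/2). -/

open Real intervalIntegral

theorem integral_integral_comp_add_mul_add {f F G : ℝ → ℝ} (hf : Continuous f)
    (hF : ∀ x, HasDerivAt F (f x) x) (hG : ∀ x, HasDerivAt G (F x) x) {K : ℝ} (hK : K ≠ 0)
    (t a₁ a₂ b₁ b₂ : ℝ) :
    ∫ b in b₁..b₂, ∫ a in a₁..a₂, f (a + K * b + t)
      = (G (a₂ + K * b₂ + t) - G (a₁ + K * b₂ + t) - G (a₂ + K * b₁ + t)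
          + G (a₁ + K * b₁ + t)) / K := by
  have hFc : Continuous F := continuous_iff_continuousAt.2 fun x => (hF x).continuousAt
  have inner (b : ℝ) :
      ∫ a in a₁..a₂, f (a + K * b + t) = F (a₂ + K * b + t) - F (a₁ + K * b + t) := by
    simp only [add_assoc]
    rw [integral_comp_add_right f]
    exact integral_eq_sub_of_hasDerivAt (fun x _ => hF x) (hf.intervalIntegrable _ _)
  have outer (a : ℝ) :
      ∫ b in b₁..b₂, F (a + K * b + t) = K⁻¹ * (G (a + K * b₂ + t) - G (a + K * b₁ + t)) := by
    have hshift (b : ℝ) : a + K * b + t = K * b + (a + t) := by ring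
    simp only [hshift]
    rw [integral_comp_mul_add F hK, smul_eq_mul,
      integral_eq_sub_of_hasDerivAt (fun x _ => hG x) (hFc.intervalIntegrable _ _)]
  have hFK (a : ℝ) : Continuous fun b => F (a + K * b + t) := by fun_prop
  simp only [inner]
  rw [integral_sub ((hFK a₂).intervalIntegrable _ _) ((hFK a₁).intervalIntegrable _ _),
    outer, outer]
  ring

theorem rpow_neg_three_halves {q : ℝ} (hq : 0 ≤ q) : q ^ (-(3 : ℝ) / 2) = (q * √q)⁻¹ := by
  rw [show -(3 : ℝ) / 2 = -(1 + 1 / 2) by norm_num, rpow_neg hq, rpow_add' hq (by norm_num),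
    rpow_one, ← sqrt_eq_rpow]

section

variable {c : ℝ} (hc : c ≠ 0)
include hc

theorem hasDerivAt_sqrt_sq_add_sq (x : ℝ) :
    HasDerivAt (fun x => √(c ^ 2 + x ^ 2)) (x / √(c ^ 2 + x ^ 2)) x := by
  have hq : c ^ 2 + x ^ 2 ≠ 0 := by positivity
  refine (((hasDerivAt_pow 2 x).const_add (c ^ 2)).sqrt hq).congr_deriv ?_
  field_simp
  norm_num

theorem hasDerivAt_div_sq_mul_sqrt_sq_add_sq (x : ℝ) :
    HasDerivAt (fun x => x / (c ^ 2 * √(c ^ 2 + x ^ 2))) ((c ^ 2 + x ^ 2) ^ (-(3 : ℝ) / 2)) x := by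
  have hq : 0 < c ^ 2 + x ^ 2 := by positivity
  refine ((hasDerivAt_id' x).div ((hasDerivAt_sqrt_sq_add_sq hc x).const_mul (c ^ 2))
    (by positivity)).congr_deriv ?_
  rw [rpow_neg_three_halves hq.le]
  field_simp
  linear_combination x ^ 2 * sq_sqrt hq.le

theorem hasDerivAt_sqrt_sq_add_sq_div_sq (x : ℝ) :
    HasDerivAt (fun x => √(c ^ 2 + x ^ 2) / c ^ 2) (x / (c ^ 2 * √(c ^ 2 + x ^ 2))) x :=
  ((hasDerivAt_sqrt_sq_add_sq hc x).div_const (c ^ 2)).congr_deriv (by ring)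

end

theorem stmt_7 (c K Ω a₁ a₂ b₁ b₂ : ℝ) (hc : 0 < c) (hK : 0 < K) :
    (∫ b in b₁..b₂, ∫ a in a₁..a₂,
        (c ^ 2 + (a + K * b - Ω) ^ 2) ^ (-(3 : ℝ) / 2))
      = (1 / (K * c ^ 2)) *
        (Real.sqrt (c ^ 2 + (a₂ + K * b₂ - Ω) ^ 2)
          - Real.sqrt (c ^ 2 + (a₁ + K * b₂ - Ω) ^ 2)
          - Real.sqrt (c ^ 2 + (a₂ + K * b₁ - Ω) ^ 2)
          + Real.sqrt (c ^ 2 + (a₁ + K * b₁ - Ω) ^ 2)) := by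
  have hf : Continuous fun x : ℝ => (c ^ 2 + x ^ 2) ^ (-(3 : ℝ) / 2) :=
    (continuous_const.add (continuous_pow 2)).rpow_const fun x =>
      Or.inl (by positivity : (0 : ℝ) < c ^ 2 + x ^ 2).ne'
  simp only [sub_eq_add_neg _ Ω]
  rw [integral_integral_comp_add_mul_add hf (hasDerivAt_div_sq_mul_sqrt_sq_add_sq hc.ne')
    (hasDerivAt_sqrt_sq_add_sq_div_sq hc.ne') hK.ne']
  ring
end

section
/- Let Ψ > 0 and let Φ, β, c₀ be real numbers with c₀ > 0. Then ∫_{−c₀}^{c₀} √(Ψ² + β² + (t − Φ)²)/(Ψ² + (t − Φ)²) dt = arcsinh((c₀ − Φ)/√(Ψ² + β²)) + arcsinh((c₀ + Φ)/√(Ψ² + β²)) + (β/Ψ)·[ arctan((c₀ − Φ)·β/(Ψ·√(Ψ² + (c₀ − Φ)² + β²))) + arctan((c₀ + Φ)·β/(Ψ·√(Ψ² + (c₀ + Φ)² + β²))) ]. -/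
/-!
Substituting `s = t - Φ` leaves the integrand `√(Ψ² + β² + s²) / (Ψ² + s²)`, and the paper's
`F(s, β)` is a primitive of it: the `arsinh` term contributes `1 / √(Ψ² + s² + β²)` and the `arctan`
term `β² / ((Ψ² + s²) √(Ψ² + s² + β²))`. Since `F` is odd in `s`, `F(c₀ - Φ) - F(-c₀ - Φ)` is the
stated sum.
-/

open Real

/-- The paper's `F(x, y)`, written `snrPrimitive Ψ y x`. -/
noncomputable def snrPrimitive (Ψ y x : ℝ) : ℝ :=
  arsinh (x / √(Ψ ^ 2 + y ^ 2)) + y / Ψ * arctan (x * y / (Ψ * √(Ψ ^ 2 + x ^ 2 + y ^ 2)))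

lemma snrPrimitive_neg (Ψ y x : ℝ) : snrPrimitive Ψ y (-x) = -snrPrimitive Ψ y x := by
  simp only [snrPrimitive, neg_sq, neg_mul, neg_div, arsinh_neg, arctan_neg]
  ring

lemma hasDerivAt_arsinh_div_sqrt {a : ℝ} (ha : 0 < a) (x : ℝ) :
    HasDerivAt (fun x ↦ arsinh (x / √a)) (1 / √(a + x ^ 2)) x := by
  have hsqrt : √(1 + (x / √a) ^ 2) = √(a + x ^ 2) / √a := by
    rw [div_pow, sq_sqrt ha.le, one_add_div ha.ne', sqrt_div' _ ha.le]
  refine ((hasDerivAt_arsinh _).comp x ((hasDerivAt_id' x).div_const √a)).congr_deriv ?_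
  have : 0 < √a := sqrt_pos.2 ha
  rw [hsqrt]
  field_simp

lemma hasDerivAt_arctan_mul_div_sqrt {Ψ : ℝ} (hΨ : Ψ ≠ 0) (y x : ℝ) :
    HasDerivAt (fun x ↦ arctan (x * y / (Ψ * √(Ψ ^ 2 + x ^ 2 + y ^ 2))))
      (Ψ * y / ((Ψ ^ 2 + x ^ 2) * √(Ψ ^ 2 + x ^ 2 + y ^ 2))) x := by
  have hpos : 0 < Ψ ^ 2 + x ^ 2 + y ^ 2 := by positivity
  have hS0 : 0 < √(Ψ ^ 2 + x ^ 2 + y ^ 2) := sqrt_pos.2 hpos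
  have hS2 : √(Ψ ^ 2 + x ^ 2 + y ^ 2) ^ 2 = Ψ ^ 2 + x ^ 2 + y ^ 2 := sq_sqrt hpos.le
  have hden : HasDerivAt (fun x ↦ Ψ * √(Ψ ^ 2 + x ^ 2 + y ^ 2))
      (Ψ * (x / √(Ψ ^ 2 + x ^ 2 + y ^ 2))) x := by
    refine ((((hasDerivAt_pow 2 x).const_add (Ψ ^ 2)).add_const (y ^ 2)).sqrt
      hpos.ne').const_mul Ψ |>.congr_deriv ?_
    field_simp
    norm_num
  refine ((hasDerivAt_arctan _).comp x
    (((hasDerivAt_id' x).mul_const y).div hden (by positivity))).congr_deriv ?_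
  simp only [Pi.div_apply]
  have : 0 < Ψ ^ 2 + x ^ 2 := by positivity
  field_simp
  linear_combination y * x ^ 2 * hS2

lemma hasDerivAt_snrPrimitive {Ψ : ℝ} (hΨ : Ψ ≠ 0) (y x : ℝ) :
    HasDerivAt (snrPrimitive Ψ y) (√(Ψ ^ 2 + y ^ 2 + x ^ 2) / (Ψ ^ 2 + x ^ 2)) x := by
  have hpos : 0 < Ψ ^ 2 + x ^ 2 + y ^ 2 := by positivity
  have hS0 : 0 < √(Ψ ^ 2 + x ^ 2 + y ^ 2) := sqrt_pos.2 hpos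
  have hS2 : √(Ψ ^ 2 + x ^ 2 + y ^ 2) ^ 2 = Ψ ^ 2 + x ^ 2 + y ^ 2 := sq_sqrt hpos.le
  refine ((hasDerivAt_arsinh_div_sqrt (by positivity : 0 < Ψ ^ 2 + y ^ 2) x).add
    ((hasDerivAt_arctan_mul_div_sqrt hΨ y x).const_mul (y / Ψ))).congr_deriv ?_
  rw [show Ψ ^ 2 + y ^ 2 + x ^ 2 = Ψ ^ 2 + x ^ 2 + y ^ 2 by ring]
  have : 0 < Ψ ^ 2 + x ^ 2 := by positivity
  field_simp
  linear_combination -hS2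

theorem integral_sqrt_div_eq_snrPrimitive_sub {Ψ : ℝ} (hΨ : Ψ ≠ 0) (y a b : ℝ) :
    ∫ t in a..b, √(Ψ ^ 2 + y ^ 2 + t ^ 2) / (Ψ ^ 2 + t ^ 2)
      = snrPrimitive Ψ y b - snrPrimitive Ψ y a := by
  have hcont : Continuous fun t : ℝ ↦ √(Ψ ^ 2 + y ^ 2 + t ^ 2) / (Ψ ^ 2 + t ^ 2) :=
    .div (by fun_prop) (by fun_prop) fun t ↦ by positivity
  exact intervalIntegral.integral_eq_sub_of_hasDerivAt
    (fun x _ ↦ hasDerivAt_snrPrimitive hΨ y x) (hcont.intervalIntegrable a b)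

theorem stmt_8_general (Ψ Φ β c₀ : ℝ) (hΨ : 0 < Ψ) :
    (∫ t in (-c₀)..c₀,
        Real.sqrt (Ψ ^ 2 + β ^ 2 + (t - Φ) ^ 2) / (Ψ ^ 2 + (t - Φ) ^ 2))
      = Real.arsinh ((c₀ - Φ) / Real.sqrt (Ψ ^ 2 + β ^ 2))
        + Real.arsinh ((c₀ + Φ) / Real.sqrt (Ψ ^ 2 + β ^ 2))
        + (β / Ψ) *
          (Real.arctan ((c₀ - Φ) * β / (Ψ * Real.sqrt (Ψ ^ 2 + (c₀ - Φ) ^ 2 + β ^ 2)))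
            + Real.arctan ((c₀ + Φ) * β / (Ψ * Real.sqrt (Ψ ^ 2 + (c₀ + Φ) ^ 2 + β ^ 2)))) := by
  rw [intervalIntegral.integral_comp_sub_right
      (fun t ↦ √(Ψ ^ 2 + β ^ 2 + t ^ 2) / (Ψ ^ 2 + t ^ 2)) Φ,
    integral_sqrt_div_eq_snrPrimitive_sub hΨ.ne', show -c₀ - Φ = -(c₀ + Φ) by ring,
    snrPrimitive_neg]
  simp only [snrPrimitive]
  ring

theorem stmt_8 (Ψ Φ β c₀ : ℝ) (hΨ : 0 < Ψ) (hc₀ : 0 < c₀) :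
    (∫ t in (-c₀)..c₀,
        Real.sqrt (Ψ ^ 2 + β ^ 2 + (t - Φ) ^ 2) / (Ψ ^ 2 + (t - Φ) ^ 2))
      = Real.arsinh ((c₀ - Φ) / Real.sqrt (Ψ ^ 2 + β ^ 2))
        + Real.arsinh ((c₀ + Φ) / Real.sqrt (Ψ ^ 2 + β ^ 2))
        + (β / Ψ) *
          (Real.arctan ((c₀ - Φ) * β / (Ψ * Real.sqrt (Ψ ^ 2 + (c₀ - Φ) ^ 2 + β ^ 2)))
            + Real.arctan ((c₀ + Φ) * β / (Ψ * Real.sqrt (Ψ ^ 2 + (c₀ + Φ) ^ 2 + β ^ 2)))) :=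
  stmt_8_general Ψ Φ β c₀ hΨ
end
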